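/- arXiv:1509.08638 — 3 statements merged into one kernel-verified Lean document; each statement's English description precedes it below -/
import Mathlib

section
/- The circular concentration of the IWP_l(λ,δ,ξ) distribution, c = sqrt(α₁² + β₁²), equals exp(-λ(1-cos(2π/l))); it is independent of δ and ξ, equals 1 iff λ = 0 (for l ≥ 2), is strictly decreasing in λ, and tends to 0 as λ → ∞. -/
open Real Filter

/-- Circular concentration of `IWP_l(λ,δ,ξ)` as a function of `λ`. -/
noncomputable def IWPconcentration (l : ℕ) (lam : ℝ) : ℝ :=
  Real.exp (-(lam * (1 - Real.cos (2 * Real.pi / l))))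

lemma Real.sqrt_mul_cos_sq_add_mul_sin_sq {r : ℝ} (hr : 0 ≤ r) (θ : ℝ) :
    √((r * cos θ) ^ 2 + (r * sin θ) ^ 2) = r := by
  rw [mul_pow, mul_pow, ← mul_add, cos_sq_add_sin_sq, mul_one, sqrt_sq hr]

lemma cos_two_pi_div_lt_one {l : ℕ} (hl : 2 ≤ l) : cos (2 * π / l) < 1 := by
  have hl' : (2 : ℝ) ≤ l := by exact_mod_cast hl
  have h_pos : 0 < 2 * π / l := by positivity
  have h_le_pi : 2 * π / l ≤ π := by
    rw [div_le_iff₀ (by linarith)]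
    nlinarith [pi_pos]
  simpa using cos_lt_cos_of_nonneg_of_le_pi le_rfl h_le_pi h_pos

namespace IWPconcentration

variable {l : ℕ}

lemma pos (l : ℕ) (lam : ℝ) : 0 < IWPconcentration l lam := exp_pos _

lemma eq_one_iff (hl : 2 ≤ l) {lam : ℝ} : IWPconcentration l lam = 1 ↔ lam = 0 := by
  have hc : 1 - cos (2 * π / l) ≠ 0 := by linarith [cos_two_pi_div_lt_one hl]
  simp [IWPconcentration, hc]

lemma strictAnti (hl : 2 ≤ l) : StrictAnti (IWPconcentration l) := by
  have hc : 0 < 1 - cos (2 * π / l) := by linarith [cos_two_pi_div_lt_one hl]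
  intro x y hxy
  exact exp_lt_exp.mpr (by nlinarith)

lemma tendsto_atTop (hl : 2 ≤ l) : Tendsto (IWPconcentration l) atTop (nhds 0) := by
  have hc : 0 < 1 - cos (2 * π / l) := by linarith [cos_two_pi_div_lt_one hl]
  exact tendsto_exp_atBot.comp (tendsto_neg_atTop_atBot.comp (tendsto_id.atTop_mul_const hc))

end IWPconcentration

theorem IWP_concentration_general (l : ℕ) (hl : 2 ≤ l) (δ ξ : ℝ) :
    (∀ lam : ℝ, 0 ≤ lam →
      Real.sqrt
          ((IWPconcentration l lam *
              Real.cos (δ * ξ + lam * Real.sin (δ * (2 * Real.pi / l)))) ^ 2 +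
            (IWPconcentration l lam *
              Real.sin (δ * ξ + lam * Real.sin (δ * (2 * Real.pi / l)))) ^ 2)
        = IWPconcentration l lam)
    ∧ (∀ lam : ℝ, 0 ≤ lam → (IWPconcentration l lam = 1 ↔ lam = 0))
    ∧ StrictAntiOn (IWPconcentration l) (Set.Ici 0)
    ∧ Tendsto (IWPconcentration l) atTop (nhds 0) :=
  ⟨fun lam _ => sqrt_mul_cos_sq_add_mul_sin_sq (IWPconcentration.pos l lam).le _,
    fun _ _ => IWPconcentration.eq_one_iff hl,
    (IWPconcentration.strictAnti hl).strictAntiOn _,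
    IWPconcentration.tendsto_atTop hl⟩

/-- The circular concentration `c = sqrt(α₁² + β₁²)` of `IWP_l(λ,δ,ξ)` equals
`exp(-λ(1-cos(2π/l)))`, independently of `δ` and `ξ`; it equals `1` iff `λ = 0`
(for `l ≥ 2`), is strictly decreasing in `λ` on `[0,∞)`, and tends to `0`
as `λ → ∞`. -/
theorem IWP_concentration (l : ℕ) (hl : 2 ≤ l) (δ ξ : ℝ) (hδ : δ = 1 ∨ δ = -1) :
    (∀ lam : ℝ, 0 ≤ lam →
      Real.sqrt
          ((IWPconcentration l lam *
              Real.cos (δ * ξ + lam * Real.sin (δ * (2 * Real.pi / l)))) ^ 2 +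
            (IWPconcentration l lam *
              Real.sin (δ * ξ + lam * Real.sin (δ * (2 * Real.pi / l)))) ^ 2)
        = IWPconcentration l lam)
    ∧ (∀ lam : ℝ, 0 ≤ lam → (IWPconcentration l lam = 1 ↔ lam = 0))
    ∧ StrictAntiOn (IWPconcentration l) (Set.Ici 0)
    ∧ Tendsto (IWPconcentration l) atTop (nhds 0) :=
  IWP_concentration_general l hl δ ξ
end

section
/- For IWP_l(λ,δ,ξ), the mean direction μ = atan2(β₁, α₁) equals (δξ + λ sin(δ·2π/l)) mod 2π. Consequently, for any fixed concentration (i.e., fixed λ), the mean direction can be set to any value in {2πm/l : 0 ≤ m < l} by varying ξ (with δ = 1 and l | λ sin(2π/l) chosen appropriately), so mean direction and concentration vary independently. -/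
/-!
The moment vector is `c (cos ψ, sin ψ)` with `c > 0`, so its argument is `ψ` reduced to `(-π, π]`,
which agrees with `ψ` modulo `2π`. When `λ sin(2π/l) = 2πk/l`, the direction for `ξ = 2πm''/l` is
`2π(m'' + k)/l` modulo `2π`, i.e. `2π((m'' + k) mod l)/l`, and `m'' ↦ (m'' + k) mod l` is onto `{0, …, l-1}`.
-/

open Real Complex

theorem toIcoMod_arg_mul_cos_add_mul_sin_mul_I {r : ℝ} (hr : 0 < r) (θ : ℝ) :
    toIcoMod two_pi_pos 0 (arg (((r * Real.cos θ : ℝ) : ℂ) + ((r * Real.sin θ : ℝ) : ℂ) * I)) =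
      toIcoMod two_pi_pos 0 θ := by
  have hpolar : ((r * Real.cos θ : ℝ) : ℂ) + ((r * Real.sin θ : ℝ) : ℂ) * I =
      r * (Complex.cos θ + Complex.sin θ * I) := by
    push_cast
    ring
  rw [hpolar, arg_mul_cos_add_sin_mul_I_eq_toIocMod hr, toIcoMod_toIocMod]

theorem toIcoMod_mul_intCast_div {p : ℝ} (hp : 0 < p) (n : ℤ) {l : ℕ} (hl : 0 < l) :
    toIcoMod hp 0 (p * n / l) = p * (n % l : ℤ) / l := by
  have hl' : (0 : ℝ) < l := Nat.cast_pos.mpr hl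
  have hlz : (0 : ℤ) < l := Int.natCast_pos.mpr hl
  rw [toIcoMod_eq_iff]
  refine ⟨⟨by have := Int.emod_nonneg n hlz.ne'; positivity, ?_⟩, n / l, ?_⟩
  · rw [zero_add, div_lt_iff₀ hl', mul_lt_mul_iff_right₀ hp]
    exact_mod_cast Int.emod_lt_of_pos n hlz
  · have hdiv : ((n % l : ℤ) : ℝ) + l * (n / l : ℤ) = n := by
      exact_mod_cast Int.emod_add_mul_ediv n l
    rw [zsmul_eq_mul, ← hdiv]
    field_simp

theorem Nat.exists_lt_add_mod_eq {l m : ℕ} (hm : m < l) (k : ℕ) : ∃ n < l, (n + k) % l = m := by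
  have : NeZero l := ⟨by omega⟩
  refine ⟨((m - k : ZMod l)).val, ZMod.val_lt _, ?_⟩
  rw [← ZMod.val_natCast, Nat.cast_add, ZMod.natCast_zmod_val, sub_add_cancel,
    ZMod.val_natCast, Nat.mod_eq_of_lt hm]

theorem IWP_mean_direction_general (l : ℕ) (lam : ℝ)
    (δ : ℝ) (ξ : ℝ) :
    (toIcoMod Real.two_pi_pos 0
        (Complex.arg
          (((Real.exp (-(lam * (1 - Real.cos (2 * Real.pi / l)))) *
              Real.cos (δ * ξ + lam * Real.sin (δ * (2 * Real.pi / l))) : ℝ) : ℂ) +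
            ((Real.exp (-(lam * (1 - Real.cos (2 * Real.pi / l)))) *
              Real.sin (δ * ξ + lam * Real.sin (δ * (2 * Real.pi / l))) : ℝ) : ℂ) *
              Complex.I))
      = toIcoMod Real.two_pi_pos 0 (δ * ξ + lam * Real.sin (δ * (2 * Real.pi / l))))
    ∧
    ((δ = 1 ∧ ∃ k : ℕ, lam * Real.sin (2 * Real.pi / l) = 2 * Real.pi * k / l) →
      ∀ m' : ℕ, m' < l → ∃ m'' : ℕ, m'' < l ∧
        toIcoMod Real.two_pi_pos 0
            (2 * Real.pi * m'' / l + lam * Real.sin (2 * Real.pi / l))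
          = 2 * Real.pi * m' / l) := by
  refine ⟨toIcoMod_arg_mul_cos_add_mul_sin_mul_I (Real.exp_pos _) _, ?_⟩
  rintro ⟨-, k, hk⟩ m' hm'
  obtain ⟨m'', hm'', hmod⟩ := Nat.exists_lt_add_mod_eq hm' k
  refine ⟨m'', hm'', ?_⟩
  have hsum : 2 * π * m'' / l + 2 * π * k / l = 2 * π * ((m'' + k : ℕ) : ℤ) / l := by
    push_cast
    ring
  rw [hk, hsum, toIcoMod_mul_intCast_div two_pi_pos _ (by omega), ← Int.natCast_mod, hmod]
  norm_cast

/-- Mean direction of `IWP_l(λ,δ,ξ)`: with first trigonometric moments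
`α₁ = c cos(δξ + λ sin(δ2π/l))` and `β₁ = c sin(δξ + λ sin(δ2π/l))`,
`c = exp(-λ(1-cos(2π/l))) > 0`, the mean direction `μ = atan2(β₁,α₁) mod 2π`
equals `(δξ + λ sin(δ·2π/l)) mod 2π`.  Moreover, for fixed `λ` (hence fixed
concentration) with `δ = 1` and `λ sin(2π/l)` a multiple of `2π/l`, the mean
direction can be set to any value in `{2πm/l : 0 ≤ m < l}` by varying `ξ`;
so mean direction and concentration vary independently. -/
theorem IWP_mean_direction (l : ℕ) (hl : 2 ≤ l) (lam : ℝ) (hlam : 0 ≤ lam)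
    (δ : ℝ) (hδ : δ = 1 ∨ δ = -1) (m : ℕ) (hm : m < l)
    (ξ : ℝ) (hξ : ξ = 2 * Real.pi * m / l) :
    (toIcoMod Real.two_pi_pos 0
        (Complex.arg
          (((Real.exp (-(lam * (1 - Real.cos (2 * Real.pi / l)))) *
              Real.cos (δ * ξ + lam * Real.sin (δ * (2 * Real.pi / l))) : ℝ) : ℂ) +
            ((Real.exp (-(lam * (1 - Real.cos (2 * Real.pi / l)))) *
              Real.sin (δ * ξ + lam * Real.sin (δ * (2 * Real.pi / l))) : ℝ) : ℂ) *
              Complex.I))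
      = toIcoMod Real.two_pi_pos 0 (δ * ξ + lam * Real.sin (δ * (2 * Real.pi / l))))
    ∧
    ((δ = 1 ∧ ∃ k : ℕ, lam * Real.sin (2 * Real.pi / l) = 2 * Real.pi * k / l) →
      ∀ m' : ℕ, m' < l → ∃ m'' : ℕ, m'' < l ∧
        toIcoMod Real.two_pi_pos 0
            (2 * Real.pi * m'' / l + lam * Real.sin (2 * Real.pi / l))
          = 2 * Real.pi * m' / l) :=
  IWP_mean_direction_general l lam δ ξ
end

section
/- For IWP_l(λ,δ,ξ) with l ≥ 3 and concentration c < 1, the circular skewness s = c·sin(μ₂ - 2μ)/(1-c)^{3/2} equals c·sin(-2λδ sin(2π/l)(1-cos(2π/l)))/(1-c)^{3/2}, where μ and μ₂ are the first and second mean directions. In particular s is independent of ξ. -/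
/-!
Reducing both mean directions mod `2π` only shifts `μ₂ - 2μ` by a multiple of `2π`, which
`sin` does not see; so the skewness depends only on `μ₂ - 2μ` computed from the unreduced
directions, where the `2δξ` terms cancel. Since `δ = ±1`, the remaining term
`λ(sin(δ·4π/l) - 2 sin(δ·2π/l))` is `λδ(sin 2x - 2 sin x)` with `x = 2π/l`, and
`sin 2x - 2 sin x = -2 sin x (1 - cos x)`.
-/

open Real

theorem Real.sin_toIcoMod_sub_int_mul_toIcoMod (x y a b : ℝ) (n : ℤ) :
    sin (toIcoMod two_pi_pos x a - n * toIcoMod two_pi_pos y b) = sin (a - n * b) := by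
  rw [← Angle.sin_coe, ← Angle.sin_coe, Angle.coe_sub, Angle.coe_sub, ← zsmul_eq_mul,
    ← zsmul_eq_mul, Angle.coe_zsmul, Angle.coe_zsmul, Angle.coe_toIcoMod, Angle.coe_toIcoMod]

theorem Real.sin_mul_of_eq_one_or_eq_neg_one {δ : ℝ} (hδ : δ = 1 ∨ δ = -1) (x : ℝ) :
    sin (δ * x) = δ * sin x := by
  rcases hδ with rfl | rfl <;> simp

theorem Real.sin_two_mul_sub_two_mul_sin (x : ℝ) :
    sin (2 * x) - 2 * sin x = -2 * sin x * (1 - cos x) := by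
  rw [sin_two_mul]
  ring

theorem IWP_skewness_general (l : ℕ) (lam : ℝ) (δ : ℝ) (hδ : δ = 1 ∨ δ = -1) (ξ : ℝ) (c : ℝ) :
    c * Real.sin
        (toIcoMod Real.two_pi_pos 0 (2 * (δ * ξ) + lam * Real.sin (δ * (4 * Real.pi / l)))
          - 2 * toIcoMod Real.two_pi_pos 0
              (δ * ξ + lam * Real.sin (δ * (2 * Real.pi / l)))) /
        (1 - c) ^ ((3:ℝ)/2)
      = c * Real.sin (-2 * lam * δ * Real.sin (2 * Real.pi / l) *
            (1 - Real.cos (2 * Real.pi / l))) /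
          (1 - c) ^ ((3:ℝ)/2) := by
  have hreduce := sin_toIcoMod_sub_int_mul_toIcoMod 0 0
    (2 * (δ * ξ) + lam * sin (δ * (4 * π / l))) (δ * ξ + lam * sin (δ * (2 * π / l))) 2
  push_cast at hreduce
  have hangle : 2 * (δ * ξ) + lam * sin (δ * (4 * π / l))
      - 2 * (δ * ξ + lam * sin (δ * (2 * π / l)))
      = -2 * lam * δ * sin (2 * π / l) * (1 - cos (2 * π / l)) := by
    have hx : 4 * π / l = 2 * (2 * π / l) := by ring
    rw [sin_mul_of_eq_one_or_eq_neg_one hδ, sin_mul_of_eq_one_or_eq_neg_one hδ, hx]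
    linear_combination lam * δ * sin_two_mul_sub_two_mul_sin (2 * π / l)
  rw [hreduce, hangle]

/-- Circular skewness of `IWP_l(λ,δ,ξ)`: with concentration
`c = exp(-λ(1-cos(2π/l))) < 1`, first and second mean directions
`μ = (δξ + λ sin(δ·2π/l)) mod 2π` and `μ₂ = (2δξ + λ sin(δ·4π/l)) mod 2π`,
the circular skewness `s = c·sin(μ₂ - 2μ)/(1-c)^(3/2)` equals
`c·sin(-2λδ sin(2π/l)(1-cos(2π/l)))/(1-c)^(3/2)`; in particular `s` does not
depend on `ξ`. -/
theorem IWP_skewness (l : ℕ) (hl : 3 ≤ l) (lam : ℝ) (hlam : 0 ≤ lam)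
    (δ : ℝ) (hδ : δ = 1 ∨ δ = -1) (m : ℕ) (hm : m < l)
    (ξ : ℝ) (hξ : ξ = 2 * Real.pi * m / l)
    (c : ℝ) (hc : c = Real.exp (-(lam * (1 - Real.cos (2 * Real.pi / l)))))
    (hc1 : c < 1) :
    c * Real.sin
        (toIcoMod Real.two_pi_pos 0 (2 * (δ * ξ) + lam * Real.sin (δ * (4 * Real.pi / l)))
          - 2 * toIcoMod Real.two_pi_pos 0
              (δ * ξ + lam * Real.sin (δ * (2 * Real.pi / l)))) /
        (1 - c) ^ ((3:ℝ)/2)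
      = c * Real.sin (-2 * lam * δ * Real.sin (2 * Real.pi / l) *
            (1 - Real.cos (2 * Real.pi / l))) /
          (1 - c) ^ ((3:ℝ)/2) :=
  IWP_skewness_general l lam δ hδ ξ c
end
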